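/- arXiv:1605.03374 — 3 statements merged into one kernel-verified Lean document; each statement's English description precedes it below -/
import Mathlib

section
/- Let G and H be odd-size arithmetic progressions in Z_n with central vertices v_G and v_H, and suppose G ∩ H = {v} with v ∉ {v_G, v_H}. If the sum of the two endpoints of G equals the sum of the two endpoints of H in Z_n (i.e., both progressions are assigned the same color j), then there exist u_G ∈ G, u_H ∈ H with u_G + v ≡ u_H + v ≡ j (mod n), forcing u_G = u_H, contradicting |G ∩ H| = 1 (when u_G ≠ v). Hence G and H receive different colors. -/
/-!
In an arithmetic progression every symmetric pair sums to the color. So if the common vertex is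
`x = v i = u i'` and both colors agree, the mirror images `v (l + 1 - i)` and `u (l' + 1 - i')`
coincide and give a common vertex too; it must be `x`, so `x` is its own mirror image in `G`,
i.e. the center of `G`.
-/

section ArithmeticProgression

variable {M : Type*} [AddCommGroup M] {v : ℕ → M} {k : M} {l : ℕ}

theorem apply_eq_add_nsmul_of_sub_eq (hv : ∀ j, 1 ≤ j → j < l → v (j + 1) - v j = k)
    {j : ℕ} (hj : 1 ≤ j) (hjl : j ≤ l) : v j = v 1 + (j - 1) • k := by
  induction j, hj using Nat.le_induction with
  | base => simp
  | succ j hj ih =>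
    rw [sub_eq_iff_eq_add'.mp (hv j hj hjl), ih (by omega), Nat.add_sub_cancel,
      ← Nat.sub_add_cancel hj, succ_nsmul, Nat.add_sub_cancel, add_assoc]

theorem apply_add_apply_reflect_of_sub_eq (hv : ∀ j, 1 ≤ j → j < l → v (j + 1) - v j = k)
    {j : ℕ} (hj : 1 ≤ j) (hjl : j ≤ l) : v j + v (l + 1 - j) = v 1 + v l := by
  rw [apply_eq_add_nsmul_of_sub_eq hv hj hjl,
    apply_eq_add_nsmul_of_sub_eq hv (j := l + 1 - j) (by omega) (by omega),
    apply_eq_add_nsmul_of_sub_eq hv (j := l) (by omega) le_rfl,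
    show l - 1 = (j - 1) + (l + 1 - j - 1) by omega, add_nsmul]
  abel

end ArithmeticProgression

theorem reflect_mem_image_Icc {α : Type*} [DecidableEq α] (v : ℕ → α) {l i : ℕ}
    (hi : i ∈ Finset.Icc 1 l) : v (l + 1 - i) ∈ (Finset.Icc 1 l).image v := by
  rw [Finset.mem_Icc] at hi
  exact Finset.mem_image_of_mem v (Finset.mem_Icc.mpr ⟨by omega, by omega⟩)

theorem stmt11_general (n : ℕ) (k k' : ZMod n) (l l' : ℕ)
    (v u : ℕ → ZMod n)
    (hv : ∀ j, 1 ≤ j → j < l → v (j + 1) - v j = k)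
    (hu : ∀ j, 1 ≤ j → j < l' → u (j + 1) - u j = k')
    (hvdist : ∀ j j', 1 ≤ j → j ≤ l → 1 ≤ j' → j' ≤ l → v j = v j' → j = j')
    (x : ZMod n)
    (hcap : ((Finset.Icc 1 l).image v) ∩ ((Finset.Icc 1 l').image u) = {x})
    (hxG : x ≠ v ((l + 1) / 2))
    (hcol : v 1 + v l = u 1 + u l') :
    False := by
  obtain ⟨hxG', hxH'⟩ := Finset.mem_inter.mp (hcap ▸ Finset.mem_singleton_self x)
  obtain ⟨i, hi, rfl⟩ := Finset.mem_image.mp hxG'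
  obtain ⟨i', hi', hui⟩ := Finset.mem_image.mp hxH'
  have hmirror : v (l + 1 - i) = u (l' + 1 - i') := by
    obtain ⟨hi₁, hi₂⟩ := Finset.mem_Icc.mp hi
    obtain ⟨hi'₁, hi'₂⟩ := Finset.mem_Icc.mp hi'
    have hsv := apply_add_apply_reflect_of_sub_eq hv hi₁ hi₂
    have hsu := apply_add_apply_reflect_of_sub_eq hu hi'₁ hi'₂
    rw [hui] at hsu
    linear_combination hsv - hsu + hcol
  have hmem : v (l + 1 - i) ∈ ((Finset.Icc 1 l).image v) ∩ ((Finset.Icc 1 l').image u) :=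
    Finset.mem_inter.mpr ⟨reflect_mem_image_Icc v hi, hmirror ▸ reflect_mem_image_Icc u hi'⟩
  rw [hcap, Finset.mem_singleton] at hmem
  rw [Finset.mem_Icc] at hi
  have hself : l + 1 - i = i := hvdist _ _ (by omega) (by omega) hi.1 hi.2 hmem
  exact hxG (by rw [show (l + 1) / 2 = i by omega])

/-- Let `G = {v 1, …, v l}` and `H = {u 1, …, u l'}` be odd-size arithmetic
progressions in `ZMod n` with central vertices `v_G = v ((l+1)/2)`,
`v_H = u ((l'+1)/2)`, and suppose `G ∩ H = {x}` with `x ∉ {v_G, v_H}`. If both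
progressions have the same color (equal sums of endpoints), a contradiction
follows; hence `G` and `H` receive different colors. -/
theorem stmt11 (n : ℕ) (hn : 2 ≤ n) (k k' : ZMod n) (l l' : ℕ)
    (hl : Odd l) (hl3 : 3 ≤ l) (hl' : Odd l') (hl3' : 3 ≤ l')
    (v u : ℕ → ZMod n)
    (hv : ∀ j, 1 ≤ j → j < l → v (j + 1) - v j = k)
    (hu : ∀ j, 1 ≤ j → j < l' → u (j + 1) - u j = k')
    (hvdist : ∀ j j', 1 ≤ j → j ≤ l → 1 ≤ j' → j' ≤ l → v j = v j' → j = j')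
    (hudist : ∀ j j', 1 ≤ j → j ≤ l' → 1 ≤ j' → j' ≤ l' → u j = u j' → j = j')
    (x : ZMod n)
    (hcap : ((Finset.Icc 1 l).image v) ∩ ((Finset.Icc 1 l').image u) = {x})
    (hxG : x ≠ v ((l + 1) / 2)) (hxH : x ≠ u ((l' + 1) / 2))
    (hcol : v 1 + v l = u 1 + u l') :
    False :=
  stmt11_general n k k' l l' v u hv hu hvdist x hcap hxG hcol
end

section
/- Let n ≥ 2 and identify V(K_n) with Z_n. Let D be a decomposition of K_n into cliques such that for every G ∈ D, the vertex set V(G) is either a k-arithmetic progression in Z_n (for some k) or the disjoint union of two k-arithmetic progressions of equal length, and such that the central vertices of the odd-size arithmetic cliques are pairwise distinct. Then χ'((K_n, D)) ≤ n. -/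
/-!
Colour each clique `G` by a "mirror sum" `s` such that `x ↦ s - x` maps `G` to itself: for a
progression `v 1, …, v l` take `s = v 1 + v l`, and for a union of two progressions
`v 1, …, v l` and `w 1, …, w l` with the same difference take `s = v 1 + w l`, which swaps them.
If two cliques through `x` received the same colour `s`, both would contain the edge
`{x, s - x}`, unless `s - x = x`; a fixed point only occurs at the central vertex of an
odd progression, and distinct odd cliques have distinct central vertices.
-/

/-- `S ⊆ ZMod n` is a `k`-arithmetic progression of length `l`, enumerated (with
distinct values) by `v 1, …, v l` with consecutive differences `k`. -/
def IsArithProg (n : ℕ) (k : ℕ) (v : ℕ → ZMod n) (l : ℕ)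
    (S : Finset (ZMod n)) : Prop :=
  (∀ j, 1 ≤ j → j < l → v (j + 1) - v j = (k : ZMod n)) ∧
  (∀ j j', 1 ≤ j → j ≤ l → 1 ≤ j' → j' ≤ l → v j = v j' → j = j') ∧
  S = (Finset.Icc 1 l).image v

def IsMirrorSum {α : Type*} [Sub α] (G : Finset α) (c s : α) : Prop :=
  ∀ x ∈ G, s - x ∈ G ∧ (s - x = x → Odd G.card ∧ x = c)

theorem IsMirrorSum.not_mem_inter {α : Type*} [AddCommGroup α] {D : Finset (Finset α)}
    (hdecomp : ∀ a b : α, a ≠ b → ∃! G, G ∈ D ∧ a ∈ G ∧ b ∈ G)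
    {G H : Finset α} (hG : G ∈ D) (hH : H ∈ D) (hGH : G ≠ H) {c d s : α}
    (hcd : Odd G.card → Odd H.card → c ≠ d)
    (hsG : IsMirrorSum G c s) (hsH : IsMirrorSum H d s) {x : α} (hxG : x ∈ G) :
    x ∉ H := by
  intro hxH
  obtain ⟨hyG, hfixG⟩ := hsG x hxG
  obtain ⟨hyH, hfixH⟩ := hsH x hxH
  by_cases hfix : s - x = x
  · obtain ⟨hoG, rfl⟩ := hfixG hfix
    obtain ⟨hoH, rfl⟩ := hfixH hfix
    exact hcd hoG hoH rfl
  · obtain ⟨K, -, huniq⟩ := hdecomp x (s - x) (Ne.symm hfix)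
    exact hGH ((huniq G ⟨hG, hxG, hyG⟩).trans (huniq H ⟨hH, hxH, hyH⟩).symm)

namespace IsArithProg

variable {n k l : ℕ} {v w : ℕ → ZMod n} {S A B : Finset (ZMod n)}

theorem apply_mem (h : IsArithProg n k v l S) {i : ℕ} (hi1 : 1 ≤ i) (hil : i ≤ l) :
    v i ∈ S :=
  h.2.2 ▸ Finset.mem_image_of_mem v (Finset.mem_Icc.2 ⟨hi1, hil⟩)

theorem exists_apply_eq (h : IsArithProg n k v l S) {x : ZMod n} (hx : x ∈ S) :
    ∃ i, 1 ≤ i ∧ i ≤ l ∧ v i = x := by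
  obtain ⟨i, hi, rfl⟩ := Finset.mem_image.1 (h.2.2 ▸ hx)
  exact ⟨i, (Finset.mem_Icc.1 hi).1, (Finset.mem_Icc.1 hi).2, rfl⟩

theorem card_eq (h : IsArithProg n k v l S) : S.card = l := by
  rw [h.2.2, Finset.card_image_of_injOn, Nat.card_Icc, Nat.add_sub_cancel]
  intro a ha b hb hab
  exact h.2.1 a b (Finset.mem_Icc.1 ha).1 (Finset.mem_Icc.1 ha).2
    (Finset.mem_Icc.1 hb).1 (Finset.mem_Icc.1 hb).2 hab

theorem apply_eq (h : IsArithProg n k v l S) {j : ℕ} (hj1 : 1 ≤ j) (hjl : j ≤ l) :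
    v j = v 1 + ((j - 1 : ℕ) : ZMod n) * k := by
  induction j, hj1 using Nat.le_induction with
  | base => simp
  | succ m hm ih =>
    rw [← sub_add_cancel (v (m + 1)) (v m), h.1 m hm (by omega), ih (by omega),
      Nat.add_sub_cancel, ← Nat.sub_add_cancel hm]
    push_cast
    ring

theorem apply_add_apply_reflect (hv : IsArithProg n k v l A) (hw : IsArithProg n k w l B)
    {i : ℕ} (hi1 : 1 ≤ i) (hil : i ≤ l) :
    v i + w (l + 1 - i) = v 1 + w 1 + ((l - 1 : ℕ) : ZMod n) * k := by
  rw [hv.apply_eq hi1 hil, hw.apply_eq (by omega) (by omega),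
    show l - 1 = (i - 1) + (l + 1 - i - 1) by omega]
  push_cast
  ring

theorem sub_mem (hv : IsArithProg n k v l A) (hw : IsArithProg n k w l B)
    {x : ZMod n} (hx : x ∈ A) : v 1 + w 1 + ((l - 1 : ℕ) : ZMod n) * k - x ∈ B := by
  obtain ⟨i, hi1, hil, rfl⟩ := hv.exists_apply_eq hx
  rw [← hv.apply_add_apply_reflect hw hi1 hil, add_sub_cancel_left]
  exact hw.apply_mem (by omega) (by omega)

theorem odd_and_eq_of_sub_eq_self (h : IsArithProg n k v l S) {x : ZMod n} (hx : x ∈ S)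
    (hfix : v 1 + v 1 + ((l - 1 : ℕ) : ZMod n) * k - x = x) :
    Odd l ∧ x = v ((l + 1) / 2) := by
  obtain ⟨i, hi1, hil, rfl⟩ := h.exists_apply_eq hx
  rw [← h.apply_add_apply_reflect h hi1 hil, add_sub_cancel_left] at hfix
  have hi : l + 1 - i = i := h.2.1 _ _ (by omega) (by omega) hi1 hil hfix
  exact ⟨⟨i - 1, by omega⟩, by rw [show (l + 1) / 2 = i by omega]⟩

theorem isMirrorSum_of_odd (h : IsArithProg n k v l S) (hl : Odd l) :
    IsMirrorSum S (v ((l + 1) / 2)) (v 1 + v 1 + ((l - 1 : ℕ) : ZMod n) * k) := fun _ hx =>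
  ⟨h.sub_mem h hx, fun hfix => ⟨h.card_eq ▸ hl, (h.odd_and_eq_of_sub_eq_self hx hfix).2⟩⟩

theorem isMirrorSum_of_even (h : IsArithProg n k v l S) (hl : ¬Odd l) (c : ZMod n) :
    IsMirrorSum S c (v 1 + v 1 + ((l - 1 : ℕ) : ZMod n) * k) := fun _ hx =>
  ⟨h.sub_mem h hx, fun hfix => absurd (h.odd_and_eq_of_sub_eq_self hx hfix).1 hl⟩

theorem isMirrorSum_union (hv : IsArithProg n k v l A) (hw : IsArithProg n k w l B)
    (hAB : Disjoint A B) (c : ZMod n) :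
    IsMirrorSum (A ∪ B) c (v 1 + w 1 + ((l - 1 : ℕ) : ZMod n) * k) := by
  intro x hx
  refine ⟨?_, fun hfix => ?_⟩
  · rcases Finset.mem_union.1 hx with hxA | hxB
    · exact Finset.mem_union_right _ (hv.sub_mem hw hxA)
    · rw [add_comm (v 1)]
      exact Finset.mem_union_left _ (hw.sub_mem hv hxB)
  · rcases Finset.mem_union.1 hx with hxA | hxB
    · exact absurd (hfix ▸ hv.sub_mem hw hxA) (Finset.disjoint_left.1 hAB hxA)
    · rw [add_comm (v 1)] at hfix
      exact absurd (hfix ▸ hw.sub_mem hv hxB) (Finset.disjoint_right.1 hAB hxB)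

end IsArithProg

theorem exists_isMirrorSum {n : ℕ} {G : Finset (ZMod n)} {c : ZMod n}
    (harith : ∃ k, (∃ l v, IsArithProg n k v l G) ∨
      (∃ l v w A B, IsArithProg n k v l A ∧ IsArithProg n k w l B ∧
        Disjoint A B ∧ G = A ∪ B))
    (hcentral : Odd G.card → ∃ k l v, Odd l ∧ IsArithProg n k v l G ∧ c = v ((l + 1) / 2)) :
    ∃ s, IsMirrorSum G c s := by
  by_cases hodd : Odd G.card
  · obtain ⟨k, l, v, hl, hv, rfl⟩ := hcentral hodd
    exact ⟨_, hv.isMirrorSum_of_odd hl⟩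
  · obtain ⟨k, ⟨l, v, hv⟩ | ⟨l, v, w, A, B, hv, hw, hAB, rfl⟩⟩ := harith
    · exact ⟨_, hv.isMirrorSum_of_even (hv.card_eq ▸ hodd) c⟩
    · exact ⟨_, hv.isMirrorSum_union hw hAB c⟩

theorem stmt13_general (n : ℕ) (D : Finset (Finset (ZMod n)))
    (hdecomp : ∀ a b : ZMod n, a ≠ b → ∃! G, G ∈ D ∧ a ∈ G ∧ b ∈ G)
    (harith : ∀ G ∈ D, ∃ k, 1 ≤ k ∧ k ≤ n / 2 ∧
      ((∃ l v, IsArithProg n k v l G) ∨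
       (∃ l v w A B, IsArithProg n k v l A ∧ IsArithProg n k w l B ∧
          Disjoint A B ∧ G = A ∪ B)))
    (central : Finset (ZMod n) → ZMod n)
    (hcentral : ∀ G ∈ D, Odd G.card → ∃ k l v, 1 ≤ k ∧ k ≤ n / 2 ∧ Odd l ∧
      IsArithProg n k v l G ∧ central G = v ((l + 1) / 2))
    (hdistinct : ∀ G ∈ D, ∀ H ∈ D, Odd G.card → Odd H.card → G ≠ H →
      central G ≠ central H) :
    ∃ col : Finset (ZMod n) → ZMod n,
      ∀ G ∈ D, ∀ H ∈ D, G ≠ H → (G ∩ H).Nonempty → col G ≠ col H := by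
  have hmirror : ∀ G, ∃ s, G ∈ D → IsMirrorSum G (central G) s := by
    intro G
    by_cases hG : G ∈ D
    · obtain ⟨s, hs⟩ := exists_isMirrorSum
        (by obtain ⟨k, -, -, h⟩ := harith G hG; exact ⟨k, h⟩)
        (fun hodd => by
          obtain ⟨k, l, v, -, -, h⟩ := hcentral G hG hodd
          exact ⟨k, l, v, h⟩)
      exact ⟨s, fun _ => hs⟩
    · exact ⟨0, fun h => absurd h hG⟩
  choose col hcol using hmirror
  refine ⟨col, fun G hG H hH hGH ⟨x, hx⟩ hcolGH => ?_⟩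
  rw [Finset.mem_inter] at hx
  exact IsMirrorSum.not_mem_inter hdecomp hG hH hGH (hdistinct G hG H hH · · hGH)
    (hcol G hG) (hcolGH ▸ hcol H hH) hx.1 hx.2

/-- If `D` is a decomposition of `K_n` on `ZMod n` into cliques whose vertex
sets are `k`-arithmetic or disjoint unions of two equal-length `k`-arithmetic
sets, with pairwise distinct central vertices of odd-size cliques, then
`χ'((K_n, D)) ≤ n`. -/
theorem stmt13 (n : ℕ) (hn : 2 ≤ n) (D : Finset (Finset (ZMod n)))
    (hdecomp : ∀ a b : ZMod n, a ≠ b → ∃! G, G ∈ D ∧ a ∈ G ∧ b ∈ G)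
    (hsize : ∀ G ∈ D, 2 ≤ G.card)
    (harith : ∀ G ∈ D, ∃ k, 1 ≤ k ∧ k ≤ n / 2 ∧
      ((∃ l v, IsArithProg n k v l G) ∨
       (∃ l v w A B, IsArithProg n k v l A ∧ IsArithProg n k w l B ∧
          Disjoint A B ∧ G = A ∪ B)))
    (central : Finset (ZMod n) → ZMod n)
    (hcentral : ∀ G ∈ D, Odd G.card → ∃ k l v, 1 ≤ k ∧ k ≤ n / 2 ∧ Odd l ∧
      IsArithProg n k v l G ∧ central G = v ((l + 1) / 2))
    (hdistinct : ∀ G ∈ D, ∀ H ∈ D, Odd G.card → Odd H.card → G ≠ H →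
      central G ≠ central H) :
    ∃ col : Finset (ZMod n) → ZMod n,
      ∀ G ∈ D, ∀ H ∈ D, G ≠ H → (G ∩ H).Nonempty → col G ≠ col H :=
  stmt13_general n D hdecomp harith central hcentral hdistinct
end

section
/- In the edge coloring of K_n on Z_n given by {a,b} ↦ a+b, two disjoint edges {a,b} and {c,d} have the same color if and only if a+b ≡ c+d (mod n); consequently, if G and H are vertex sets of two cliques in a linear decomposition (|V(G) ∩ V(H)| ≤ 1) whose associated matchings M_G, M_H (pairing symmetric elements of their arithmetic orderings) both contain an edge through their common vertex v, then the colors of G and H differ. -/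
/-- The edge coloring of `K_n` on `ZMod n` given by `{a,b} ↦ a+b`. -/
def pairColor (n : ℕ) : Sym2 (ZMod n) → ZMod n :=
  Sym2.lift ⟨fun a b => a + b, fun a b => add_comm a b⟩

/-!
Both vertex sequences are arithmetic progressions, so the symmetric pairs of each one all have
the same sum, the colour of the clique. If the colours agreed, the partner `y` of the common
vertex `x` in the first matching and its partner in the second would both solve `x + y = c`,
so they coincide; `y` would then be a second common vertex of the two cliques.
-/

section ArithmeticProgression

variable {G : Type*} [AddCommGroup G] {k : G} {l : ℕ} {v : ℕ → G}

theorem eq_add_nsmul_of_sub_eq (hv : ∀ j, 1 ≤ j → j < l → v (j + 1) - v j = k)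
    {i : ℕ} (hi₁ : 1 ≤ i) (hil : i ≤ l) : v i = v 1 + (i - 1) • k := by
  induction i, hi₁ using Nat.le_induction with
  | base => simp
  | succ i hi₁ ih =>
    rw [← sub_add_cancel (v (i + 1)) (v i), hv i hi₁ hil, ih (by omega),
      Nat.add_sub_cancel, add_comm k, add_assoc, ← succ_nsmul, Nat.sub_add_cancel hi₁]

theorem add_symm_eq_of_sub_eq (hv : ∀ j, 1 ≤ j → j < l → v (j + 1) - v j = k)
    {j : ℕ} (hj₁ : 1 ≤ j) (hjl : j ≤ l) : v j + v (l + 1 - j) = v 1 + v l := by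
  rw [eq_add_nsmul_of_sub_eq hv hj₁ hjl,
    eq_add_nsmul_of_sub_eq hv (by omega) (by omega : l + 1 - j ≤ l),
    eq_add_nsmul_of_sub_eq hv (hj₁.trans hjl) le_rfl, add_add_add_comm, ← add_nsmul,
    show j - 1 + (l + 1 - j - 1) = l - 1 by omega, add_assoc]

end ArithmeticProgression

theorem add_ne_of_image_inter_eq_singleton {G : Type*} [AddCommGroup G] [DecidableEq G]
    {k k' : G} {l m : ℕ} {v w : ℕ → G} {x : G}
    (hv : ∀ j, 1 ≤ j → j < l → v (j + 1) - v j = k)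
    (hw : ∀ j, 1 ≤ j → j < m → w (j + 1) - w j = k')
    (hcap : (Finset.Icc 1 l).image v ∩ (Finset.Icc 1 m).image w = {x})
    {j j' : ℕ} (hj₁ : 1 ≤ j) (hjl : j ≤ l) (hxv : x = v j) (hpartner : v (l + 1 - j) ≠ x)
    (hj'₁ : 1 ≤ j') (hj'm : j' ≤ m) (hxw : x = w j') :
    v 1 + v l ≠ w 1 + w m := by
  intro hcolor
  have hpartners : v (l + 1 - j) = w (m + 1 - j') := by
    apply add_left_cancel (a := x)
    conv_lhs => rw [hxv]
    conv_rhs => rw [hxw]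
    rw [add_symm_eq_of_sub_eq hv hj₁ hjl, add_symm_eq_of_sub_eq hw hj'₁ hj'm, hcolor]
  have hmem : v (l + 1 - j) ∈ (Finset.Icc 1 l).image v ∩ (Finset.Icc 1 m).image w :=
    Finset.mem_inter.2
      ⟨Finset.mem_image_of_mem v (Finset.mem_Icc.2 ⟨by omega, by omega⟩),
        hpartners ▸ Finset.mem_image_of_mem w (Finset.mem_Icc.2 ⟨by omega, by omega⟩)⟩
  exact hpartner (Finset.mem_singleton.1 (hcap ▸ hmem))

theorem stmt19_general (n : ℕ) :
    (∀ a b c d : ZMod n, a ≠ b → c ≠ d →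
      ({a, b} : Finset (ZMod n)) ∩ {c, d} = ∅ →
      (pairColor n s(a, b) = pairColor n s(c, d) ↔ a + b = c + d)) ∧
    (∀ (k k' : ZMod n) (l m : ℕ) (v w : ℕ → ZMod n) (x : ZMod n),
      2 ≤ l → 2 ≤ m →
      (∀ j, 1 ≤ j → j < l → v (j + 1) - v j = k) →
      (∀ j, 1 ≤ j → j < m → w (j + 1) - w j = k') →
      (∀ j j', 1 ≤ j → j ≤ l → 1 ≤ j' → j' ≤ l → v j = v j' → j = j') →
      (∀ j j', 1 ≤ j → j ≤ m → 1 ≤ j' → j' ≤ m → w j = w j' → j = j') →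
      ((Finset.Icc 1 l).image v) ∩ ((Finset.Icc 1 m).image w) = {x} →
      (∃ j, 1 ≤ j ∧ j ≤ l ∧ x = v j ∧ v (l + 1 - j) ≠ x) →
      (∃ j, 1 ≤ j ∧ j ≤ m ∧ x = w j ∧ w (m + 1 - j) ≠ x) →
      v 1 + v l ≠ w 1 + w m) := by
  refine ⟨fun a b c d _ _ _ => Iff.rfl, ?_⟩
  rintro k k' l m v w x - - hv hw - - hcap ⟨j, hj₁, hjl, hxv, hpartner⟩
    ⟨j', hj'₁, hj'm, hxw, -⟩
  exact add_ne_of_image_inter_eq_singleton hv hw hcap hj₁ hjl hxv hpartner hj'₁ hj'm hxw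

/-- In the edge coloring `{a,b} ↦ a+b` of `K_n` on `ZMod n`, two disjoint edges
`{a,b}` and `{c,d}` have the same color iff `a+b = c+d`; consequently, if `G`
and `H` are vertex sets of two cliques in a linear decomposition (sharing
exactly one vertex `x`) whose associated matchings (pairing symmetric elements
of their arithmetic orderings) both contain an edge through `x`, then the
colors of `G` and `H` differ. -/
theorem stmt19 (n : ℕ) (hn : 2 ≤ n) :
    (∀ a b c d : ZMod n, a ≠ b → c ≠ d →
      ({a, b} : Finset (ZMod n)) ∩ {c, d} = ∅ →
      (pairColor n s(a, b) = pairColor n s(c, d) ↔ a + b = c + d)) ∧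
    (∀ (k k' : ZMod n) (l m : ℕ) (v w : ℕ → ZMod n) (x : ZMod n),
      2 ≤ l → 2 ≤ m →
      (∀ j, 1 ≤ j → j < l → v (j + 1) - v j = k) →
      (∀ j, 1 ≤ j → j < m → w (j + 1) - w j = k') →
      (∀ j j', 1 ≤ j → j ≤ l → 1 ≤ j' → j' ≤ l → v j = v j' → j = j') →
      (∀ j j', 1 ≤ j → j ≤ m → 1 ≤ j' → j' ≤ m → w j = w j' → j = j') →
      ((Finset.Icc 1 l).image v) ∩ ((Finset.Icc 1 m).image w) = {x} →
      (∃ j, 1 ≤ j ∧ j ≤ l ∧ x = v j ∧ v (l + 1 - j) ≠ x) →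
      (∃ j, 1 ≤ j ∧ j ≤ m ∧ x = w j ∧ w (m + 1 - j) ≠ x) →
      v 1 + v l ≠ w 1 + w m) :=
  stmt19_general n
end
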